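/- Let Θ be an inner function and let C be the conjugation Cf = conj(zf)Θ on K_Θ. If φ ∈ L² and A_φ is bounded on K_Θ, then C A_φ C = A_φ* (the adjoint of A_φ); in particular every bounded truncated Toeplitz operator is a complex symmetric operator with respect to C. -/

import Mathlib

open MeasureTheory Complex Filter
open scoped ENNReal

noncomputable section

instance : Fact (0 < 2 * Real.pi) := ⟨by positivity⟩

/-- The circle group `ℝ / 2πℤ`, parametrizing the unit circle `∂𝔻`. -/
abbrev 𝕋 := AddCircle (2 * Real.pi)

/-- Normalized arclength (Haar) measure `|dζ|/2π` on the circle. -/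
abbrev μT : Measure 𝕋 := AddCircle.haarAddCircle

/-- The boundary point `e^{iθ} ∈ ∂𝔻` corresponding to `θ : 𝕋`. -/
def bz (θ : 𝕋) : ℂ := (AddCircle.toCircle θ : ℂ)

/-- The `L²(∂𝔻, |dζ|/2π)` inner product `⟨f, g⟩ = ∫ f conj(g)`. -/
def ip (f g : 𝕋 → ℂ) : ℂ := ∫ θ, f θ * (starRingEnd ℂ) (g θ) ∂μT

/-- The `L²(∂𝔻, |dζ|/2π)` norm. -/
def nrm2 (f : 𝕋 → ℂ) : ℝ := (∫ θ, ‖f θ‖ ^ 2 ∂μT) ^ (1 / 2 : ℝ)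

/-- The essential supremum (`L^∞`) norm on `∂𝔻`. -/
def nrmInf (f : 𝕋 → ℂ) : ℝ := (eLpNorm f ⊤ μT).toReal

/-- `f` belongs to the Hardy space `H²`, viewed via boundary values: `f ∈ L²` and all
negatively-indexed Fourier coefficients vanish. -/
def MemH2 (f : 𝕋 → ℂ) : Prop :=
  MemLp f 2 μT ∧ ∀ n : ℤ, n < 0 → fourierCoeff f n = 0

/-- An inner function, recorded through its boundary values: an `H²` function which is
unimodular a.e. on `∂𝔻`. -/
structure InnerFn where
  toFun : 𝕋 → ℂ
  memH2 : MemH2 toFun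
  unimod : ∀ᵐ θ ∂μT, ‖toFun θ‖ = 1

/-- The Poisson extension `𝔓f` of a boundary function `f` at a point `l` of `𝔻`. -/
def poisson (f : 𝕋 → ℂ) (l : ℂ) : ℂ :=
  ∫ θ, (((1 - ‖l‖ ^ 2) / ‖bz θ - l‖ ^ 2 : ℝ) : ℂ) * f θ ∂μT

/-- The value `Θ(l)` of an inner function at a point `l ∈ 𝔻`, recovered from its
boundary values by the Poisson integral. -/
def InnerFn.dval (Θ : InnerFn) (l : ℂ) : ℂ := poisson Θ.toFun l

/-- `Θ` is a non-constant inner function. -/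
def InnerFn.NonConst (Θ : InnerFn) : Prop := ¬ ∃ c : ℂ, ∀ᵐ θ ∂μT, Θ.toFun θ = c

/-- Membership in the model space `K_Θ = H² ⊖ ΘH²`: `f ∈ H²` and `f ⟂ Θg` for all `g ∈ H²`. -/
def MemK (Θ : InnerFn) (f : 𝕋 → ℂ) : Prop :=
  MemH2 f ∧ ∀ g : 𝕋 → ℂ, MemH2 g → ip f (fun θ => Θ.toFun θ * g θ) = 0

/-- `p` is the orthogonal projection `P_Θ(u)` of `u ∈ L²` onto the model space `K_Θ`:
`p ∈ K_Θ` and `u - p ⟂ K_Θ`. -/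
def IsProjK (Θ : InnerFn) (u p : 𝕋 → ℂ) : Prop :=
  MemK Θ p ∧ ∀ k : 𝕋 → ℂ, MemK Θ k → ip (fun θ => u θ - p θ) k = 0

/-- The norm (possibly `∞`) of the truncated Toeplitz operator `A_φ f = P_Θ(φ f)`,
densely defined on `K_Θ^∞ = K_Θ ∩ H^∞`: the supremum of `‖P_Θ(φ f)‖` over unit vectors
`f ∈ K_Θ ∩ H^∞`. -/
def ttNorm (Θ : InnerFn) (φ : 𝕋 → ℂ) : ℝ≥0∞ :=
  sSup {c : ℝ≥0∞ | ∃ f p : 𝕋 → ℂ, MemK Θ f ∧ MemLp f ⊤ μT ∧ nrm2 f = 1 ∧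
    IsProjK Θ (fun θ => φ θ * f θ) p ∧ c = ENNReal.ofReal (nrm2 p)}

/-- The reproducing kernel `k_λ(z) = (1 - conj(Θ(λ))Θ(z))/(1 - conj(λ)z)` of `K_Θ`,
as a boundary function. -/
def kfun (Θ : InnerFn) (l : ℂ) (θ : 𝕋) : ℂ :=
  (1 - (starRingEnd ℂ) (Θ.dval l) * Θ.toFun θ) / (1 - (starRingEnd ℂ) l * bz θ)

/-- The Stolz (nontangential approach) region at a boundary point `z0 ∈ ∂𝔻` with
aperture `κ`. -/
def stolzAt (z0 : ℂ) (κ : ℝ) : Set ℂ := {z : ℂ | ‖z‖ < 1 ∧ ‖z - z0‖ < κ * (1 - ‖z‖)}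

/-- `f` has nontangential limit `L` at the boundary point `z0`. -/
def NTLim (f : ℂ → ℂ) (z0 L : ℂ) : Prop :=
  ∀ κ : ℝ, 1 < κ → Tendsto f (nhdsWithin z0 (stolzAt z0 κ)) (nhds L)

/-- `Θ` has a finite angular derivative at `ζ ∈ ∂𝔻`, with nontangential boundary value `w`
(of modulus one) and angular derivative `w'`: equivalently, `(Θ(z) - w)/(z - ζ)` has
nontangential limit `w'` at `ζ`. -/
def HasAngularDeriv (Θ : InnerFn) (ζ w w' : ℂ) : Prop :=
  ‖w‖ = 1 ∧ NTLim Θ.dval ζ w ∧ NTLim (fun z => (Θ.dval z - w) / (z - ζ)) ζ w'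

end

/-- The natural conjugation `(Cf)(z) = conj(z f(z)) Θ(z)` on the model space `K_Θ`. -/
noncomputable def Cfun (Θ : InnerFn) (f : 𝕋 → ℂ) (θ : 𝕋) : ℂ :=
  (starRingEnd ℂ) (bz θ * f θ) * Θ.toFun θ

/-! The conjugation `C` is antilinear and, because `|z| = |Θ| = 1` a.e. on the circle, it
satisfies `(Cu) · conj (Cv) = v · conj u` a.e.; hence `⟨φ Cf, Cg⟩ = ⟨φ g, f⟩`. It maps
`K_Θ` into itself: the negative Fourier coefficients of `Cf` are conjugates of
`⟨f, Θ z^m⟩ = 0` with `m ≥ 0`, and `⟨Cf, Θ h⟩ = conj ∫ z f h`, which vanishes for `f, h ∈ H²`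
by Parseval since the Fourier supports of `z f` and of `conj h` are disjoint. Testing the
projections `A_φ(Cf)` and `A_φ g` against `Cg ∈ K_Θ` and `f ∈ K_Θ` then gives the claim. -/

open scoped ComplexConjugate InnerProductSpace

lemma norm_bz (θ : 𝕋) : ‖bz θ‖ = 1 := Circle.norm_coe _

lemma continuous_bz : Continuous bz := continuous_subtype_val.comp AddCircle.continuous_toCircle

lemma bz_eq_fourier_one (θ : 𝕋) : bz θ = fourier 1 θ := fourier_one.symm

lemma InnerFn.mul_conj_ae (Θ : InnerFn) : ∀ᵐ θ ∂μT, Θ.toFun θ * conj (Θ.toFun θ) = 1 :=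
  Θ.unimod.mono fun θ hθ => by rw [Complex.mul_conj', hθ]; norm_num

lemma conj_ip (a b : 𝕋 → ℂ) : conj (ip a b) = ip b a := by
  rw [ip, ← integral_conj]
  congr 1 with θ
  simp [mul_comm]

lemma integrable_mul_conj {a b : 𝕋 → ℂ} (ha : MemLp a 2 μT) (hb : MemLp b 2 μT) :
    Integrable (fun θ => a θ * conj (b θ)) μT :=
  ha.integrable_mul (p := 2) (q := 2) hb.star

lemma IsProjK.ip_eq {Θ : InnerFn} {u p k : 𝕋 → ℂ} (hp : IsProjK Θ u p) (hk : MemK Θ k)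
    (hu : Integrable (fun θ => u θ * conj (k θ)) μT) : ip u k = ip p k := by
  have h := hp.2 k hk
  simp only [ip, sub_mul] at h
  rwa [integral_sub hu (integrable_mul_conj hp.1.1.1 hk.1.1), sub_eq_zero] at h

lemma fourierCoeff_bz_mul (u : 𝕋 → ℂ) (n : ℤ) :
    fourierCoeff (fun θ => bz θ * u θ) n = fourierCoeff u (n - 1) := by
  unfold fourierCoeff
  congr 1 with θ
  simp only [smul_eq_mul, bz_eq_fourier_one, ← mul_assoc, ← fourier_add]
  ring_nf

lemma fourierCoeff_conj (v : 𝕋 → ℂ) (n : ℤ) :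
    fourierCoeff (fun θ => conj (v θ)) n = conj (fourierCoeff v (-n)) := by
  unfold fourierCoeff
  rw [← integral_conj]
  congr 1 with θ
  simp

lemma integral_mul_conj_eq_tsum_fourierCoeff {a b : 𝕋 → ℂ} (ha : MemLp a 2 μT)
    (hb : MemLp b 2 μT) :
    ∫ θ, a θ * conj (b θ) ∂μT = ∑' n : ℤ, fourierCoeff a n * conj (fourierCoeff b n) := by
  have hrepr : ∀ {c : 𝕋 → ℂ} (hc : MemLp c 2 μT) (n : ℤ),
      ⟪fourierBasis n, hc.toLp c⟫_ℂ = fourierCoeff c n := fun hc n => by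
    rw [← fourierBasis.repr_apply_apply, fourierBasis_repr,
      fourierCoeff_congr_ae hc.coeFn_toLp]
  calc ∫ θ, a θ * conj (b θ) ∂μT = ⟪hb.toLp b, ha.toLp a⟫_ℂ := by
        rw [L2.inner_def]
        refine integral_congr_ae ?_
        filter_upwards [ha.coeFn_toLp, hb.coeFn_toLp] with θ hθa hθb
        rw [RCLike.inner_apply, hθa, hθb, mul_comm]
    _ = ∑' n : ℤ, fourierCoeff a n * conj (fourierCoeff b n) := by
        rw [← fourierBasis.tsum_inner_mul_inner]
        congr 1 with n
        rw [← inner_conj_symm, hrepr, hrepr, mul_comm]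

lemma integral_bz_mul_mul_eq_zero {u v : 𝕋 → ℂ} (hu : MemH2 u) (hv : MemH2 v) :
    ∫ θ, bz θ * u θ * v θ ∂μT = 0 := by
  have hzu : MemLp (fun θ => bz θ * u θ) 2 μT :=
    hu.1.congr_norm (continuous_bz.aestronglyMeasurable.mul hu.1.1)
      (.of_forall fun θ => by rw [norm_mul, norm_bz, one_mul])
  have hparseval :=
    integral_mul_conj_eq_tsum_fourierCoeff (b := fun θ => conj (v θ)) hzu hv.1.star
  simp only [Complex.conj_conj, fourierCoeff_bz_mul, fourierCoeff_conj] at hparseval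
  rw [hparseval]
  refine (tsum_congr fun n => ?_).trans tsum_zero
  rcases lt_or_ge n 1 with hn | hn
  · rw [hu.2 (n - 1) (by omega), zero_mul]
  · rw [hv.2 (-n) (by omega), mul_zero]

lemma memH2_fourier {m : ℤ} (hm : 0 ≤ m) : MemH2 (fun θ : 𝕋 => fourier m θ) := by
  refine ⟨(Lp.memLp (fourierLp 2 m)).ae_eq (coeFn_fourierLp 2 m), fun n hn => ?_⟩
  rw [fourierCoeff_fourier, Pi.single_eq_of_ne (by omega)]

lemma memLp_cfun (Θ : InnerFn) {a : 𝕋 → ℂ} {p : ℝ≥0∞} (ha : MemLp a p μT) :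
    MemLp (Cfun Θ a) p μT := by
  refine ha.congr_norm ?_ ?_
  · exact ((continuous_bz.aestronglyMeasurable.mul ha.1).star).mul Θ.memH2.1.1
  · filter_upwards [Θ.unimod] with θ hθ
    rw [Cfun, norm_mul, RCLike.norm_conj, norm_mul, norm_bz, hθ, one_mul, mul_one]

lemma fourierCoeff_cfun (Θ : InnerFn) (a : 𝕋 → ℂ) (n : ℤ) :
    fourierCoeff (Cfun Θ a) n = conj (ip a fun θ => Θ.toFun θ * fourier (-(n + 1)) θ) := by
  rw [ip, ← integral_conj, fourierCoeff]
  congr 1 with θ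
  have hshift : fourier (-(n + 1)) θ = fourier (-n) θ * conj (bz θ) := by
    rw [bz_eq_fourier_one, ← fourier_neg, ← fourier_add]
    ring_nf
  simp only [Cfun, hshift, smul_eq_mul, map_mul, Complex.conj_conj]
  ring

lemma ip_cfun_mul (Θ : InnerFn) (a h : 𝕋 → ℂ) :
    ip (Cfun Θ a) (fun θ => Θ.toFun θ * h θ) = conj (∫ θ, bz θ * a θ * h θ ∂μT) := by
  rw [ip, ← integral_conj]
  refine integral_congr_ae ?_
  filter_upwards [Θ.mul_conj_ae] with θ hΘ
  calc Cfun Θ a θ * conj (Θ.toFun θ * h θ)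
      = conj (bz θ * a θ * h θ) * (Θ.toFun θ * conj (Θ.toFun θ)) := by
        simp only [Cfun, map_mul]; ring
    _ = conj (bz θ * a θ * h θ) := by rw [hΘ, mul_one]

lemma memK_cfun (Θ : InnerFn) {a : 𝕋 → ℂ} (ha : MemK Θ a) : MemK Θ (Cfun Θ a) := by
  refine ⟨⟨memLp_cfun Θ ha.1.1, fun n hn => ?_⟩, fun h hh => ?_⟩
  · rw [fourierCoeff_cfun, ha.2 _ (memH2_fourier (by omega)), map_zero]
  · rw [ip_cfun_mul, integral_bz_mul_mul_eq_zero ha.1 hh, map_zero]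

lemma cfun_mul_conj_cfun_ae (Θ : InnerFn) (a b : 𝕋 → ℂ) :
    (fun θ => Cfun Θ a θ * conj (Cfun Θ b θ)) =ᵐ[μT] fun θ => b θ * conj (a θ) := by
  filter_upwards [Θ.mul_conj_ae] with θ hΘ
  have hz : conj (bz θ) * bz θ = 1 := by
    rw [Complex.conj_mul', norm_bz]; norm_num
  calc Cfun Θ a θ * conj (Cfun Θ b θ)
      = b θ * conj (a θ) * (conj (bz θ) * bz θ) * (Θ.toFun θ * conj (Θ.toFun θ)) := by
        simp only [Cfun, map_mul, Complex.conj_conj]; ring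
    _ = b θ * conj (a θ) := by rw [hz, hΘ, mul_one, mul_one]

theorem ttOperator_complex_symmetric_general (Θ : InnerFn) (φ : 𝕋 → ℂ) (hφ : MemLp φ 2 μT)
    (f g pf pg : 𝕋 → ℂ)
    (hf : MemK Θ f) (hg : MemK Θ g) (hgInf : MemLp g ⊤ μT)
    (hpf : IsProjK Θ (fun θ => φ θ * Cfun Θ f θ) pf)
    (hpg : IsProjK Θ (fun θ => φ θ * g θ) pg) :
    ip (Cfun Θ g) pf = ip f pg := by
  have hsymm : (fun θ => φ θ * Cfun Θ f θ * conj (Cfun Θ g θ)) =ᵐ[μT]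
      fun θ => φ θ * g θ * conj (f θ) :=
    (cfun_mul_conj_cfun_ae Θ f g).mono fun θ h => by simp only [mul_assoc, h]
  have hint : Integrable (fun θ => φ θ * g θ * conj (f θ)) μT :=
    integrable_mul_conj (hgInf.mul' hφ) hf.1.1
  calc ip (Cfun Θ g) pf
      = conj (ip pf (Cfun Θ g)) := (conj_ip _ _).symm
    _ = conj (ip (fun θ => φ θ * Cfun Θ f θ) (Cfun Θ g)) := by
        rw [hpf.ip_eq (memK_cfun Θ hg) (hint.congr hsymm.symm)]
    _ = conj (ip (fun θ => φ θ * g θ) f) := by rw [ip, ip, integral_congr_ae hsymm]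
    _ = conj (ip pg f) := by rw [hpg.ip_eq hf hint]
    _ = ip f pg := conj_ip _ _

/-- every bounded truncated Toeplitz operator is complex symmetric with
respect to `C`: `C A_φ C = A_φ*`, expressed weakly as
`⟨Cg, A_φ(Cf)⟩ = ⟨f, A_φ g⟩` for all `f, g` in the domain. -/
theorem ttOperator_complex_symmetric (Θ : InnerFn) (φ : 𝕋 → ℂ) (hφ : MemLp φ 2 μT)
    (hbdd : ttNorm Θ φ < ⊤) (f g pf pg : 𝕋 → ℂ)
    (hf : MemK Θ f) (hfInf : MemLp f ⊤ μT) (hg : MemK Θ g) (hgInf : MemLp g ⊤ μT)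
    (hpf : IsProjK Θ (fun θ => φ θ * Cfun Θ f θ) pf)
    (hpg : IsProjK Θ (fun θ => φ θ * g θ) pg) :
    ip (Cfun Θ g) pf = ip f pg :=
  ttOperator_complex_symmetric_general Θ φ hφ f g pf pg hf hg hgInf hpf hpg
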